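/- Let y be a fractional cache state and assume k ≥ 1 (so K ≥ 2). For each l ∈ {1,…,N} let l* = π^{−1}(l) be the position of l under π, and let i*(l) = max{ i ∈ {1,…,K−1} : ∑_{j=1}^{i} y_{π_j} ≤ k and l+N ∉ {π_1,…,π_i} } (this set is nonempty since i = 1 belongs to it). Define g ∈ ℝ^N by g_l = ( c(π_{i*(l)+1}) − c(l) ) · 𝟙{ l* ≤ i*(l) }. Then g is a supergradient of the caching gain at y, regarded as a concave function of the first N coordinates with y_{l+N} = 1 − y_l substituted: for every fractional cache state y', G(y') ≤ G(y) + ∑_{l=1}^{N} g_l · (y'_l − y_l). -/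

import Mathlib

/-!
Each summand `α_i · min (k - σ_i, S_i(y) - σ_i)` of the gain, with `S_i(y) = ∑_{j ≤ i} y_{π_j}`,
is a concave function of the prefix sum `S_i` with supergradient `𝟙{S_i(y) ≤ k}`, and
`α_i ≥ 0` because `π` sorts the costs. Since `y_{l+N} = 1 - y_l` and `l` precedes `l + N`,
`S_i(y') - S_i(y) = ∑_l 𝟙{l* ≤ i < (l+N)*} (y'_l - y_l)`. Exchanging the two sums, the
coefficient of `y'_l - y_l` is the sum of `α_i` over those `i ≥ l*` with `S_i(y) ≤ k` and
`i < (l+N)*`. Prefix sums of `y ≥ 0` are monotone, so these `i` form the interval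
`[l*, i*(l)]`, and the sum telescopes to `c(π_{i*(l)+1}) - c(l)`.
-/

namespace ACAI

/-- `sigma N π i` = number of indices `j ∈ {1,…,i}` with `π j > N`, i.e. the number of
objects among the `i` cheapest that are served from the server. -/
def sigma (N : ℕ) (π : ℕ → ℕ) (i : ℕ) : ℕ :=
  ((Finset.Icc 1 i).filter (fun j => N < π j)).card

/-- `Kmin N k π` = least index `i` with `sigma N π i = k`. -/
noncomputable def Kmin (N k : ℕ) (π : ℕ → ℕ) : ℕ :=
  sInf {i | sigma N π i = k}

/-- `alpha c π i = c (π (i+1)) - c (π i)`. -/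
noncomputable def alpha (c : ℕ → ℝ) (π : ℕ → ℕ) (i : ℕ) : ℝ :=
  c (π (i + 1)) - c (π i)

/-- A fractional cache state: `y ∈ [0,1]^{2N}` with `∑_{i=1}^{N} y i = h` and
`y (i+N) = 1 - y i` for `i ∈ {1,…,N}`. -/
def IsFrac (N h : ℕ) (y : ℕ → ℝ) : Prop :=
  (∀ i ∈ Finset.Icc 1 (2 * N), y i ∈ Set.Icc (0 : ℝ) 1) ∧
  (∑ i ∈ Finset.Icc 1 N, y i = (h : ℝ)) ∧
  (∀ i ∈ Finset.Icc 1 N, y (i + N) = 1 - y i)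

/-- An integral cache state: a fractional cache state with `{0,1}` coordinates. -/
def IsInt (N h : ℕ) (y : ℕ → ℝ) : Prop :=
  IsFrac N h y ∧ ∀ i ∈ Finset.Icc 1 (2 * N), y i = 0 ∨ y i = 1

/-- A request over the augmented catalog `U = {1,…,2N}`: nonnegative costs `c` with
`c (i+N) = c i + cf` for catalog objects `i ∈ {1,…,N}`, and a bijection `π` of
`{1,…,2N}` sorting the costs nondecreasingly and placing each `i ∈ {1,…,N}` before
`i + N`. -/
def Request (N : ℕ) (cf : ℝ) (c : ℕ → ℝ) (π : ℕ → ℕ) : Prop :=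
  (∀ i ∈ Finset.Icc 1 (2 * N), 0 ≤ c i) ∧
  (∀ i ∈ Finset.Icc 1 N, c (i + N) = c i + cf) ∧
  Set.BijOn π (Set.Icc 1 (2 * N)) (Set.Icc 1 (2 * N)) ∧
  (∀ i, 1 ≤ i → i < 2 * N → c (π i) ≤ c (π (i + 1))) ∧
  (∀ j l, j ∈ Set.Icc 1 (2 * N) → l ∈ Set.Icc 1 (2 * N) →
    π j ≤ N → π l = π j + N → j < l)

/-- The caching gain
`G(y) = ∑_{i=1}^{K-1} α_i · min { k - σ_i, (∑_{j=1}^{i} y_{π j}) - σ_i }`. -/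
noncomputable def gain (N k : ℕ) (c : ℕ → ℝ) (π : ℕ → ℕ) (y : ℕ → ℝ) : ℝ :=
  ∑ i ∈ Finset.Icc 1 (Kmin N k π - 1),
    alpha c π i *
      min ((k : ℝ) - sigma N π i) ((∑ j ∈ Finset.Icc 1 i, y (π j)) - sigma N π i)

open Classical in
/-- `Iset N π i = { j ∈ {1,…,i} : π j ≤ N and π j + N ∉ {π 1, …, π i} }`. -/
noncomputable def Iset (N : ℕ) (π : ℕ → ℕ) (i : ℕ) : Finset ℕ :=
  (Finset.Icc 1 i).filter (fun j => π j ≤ N ∧ ∀ l ∈ Finset.Icc 1 i, π l ≠ π j + N)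

/-- The auxiliary (multilinear) gain
`L(y) = ∑_{i=1}^{K-1} α_i (k - σ_i) (1 - ∏_{j ∈ I_i} (1 - y_{π j}/(k - σ_i)))`. -/
noncomputable def aux (N k : ℕ) (c : ℕ → ℝ) (π : ℕ → ℕ) (y : ℕ → ℝ) : ℝ :=
  ∑ i ∈ Finset.Icc 1 (Kmin N k π - 1),
    alpha c π i * ((k : ℝ) - sigma N π i) *
      (1 - ∏ j ∈ Iset N π i, (1 - y (π j) / ((k : ℝ) - sigma N π i)))

/-- `istar N k π y l` = largest `i ∈ {1,…,K-1}` such that `∑_{j=1}^{i} y_{π j} ≤ k`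
and `l + N ∉ {π 1, …, π i}`. -/
noncomputable def istar (N k : ℕ) (π : ℕ → ℕ) (y : ℕ → ℝ) (l : ℕ) : ℕ :=
  sSup {i | i ∈ Finset.Icc 1 (Kmin N k π - 1) ∧
    (∑ j ∈ Finset.Icc 1 i, y (π j)) ≤ (k : ℝ) ∧
    ∀ v ∈ Finset.Icc 1 i, π v ≠ l + N}

/-- The supergradient vector: `g l = (c (π (i*(l)+1)) - c l) · 𝟙{l* ≤ i*(l)}`, where
`l* = π⁻¹ l` is given by the function `lstar`. -/
noncomputable def superg (N k : ℕ) (c : ℕ → ℝ) (π : ℕ → ℕ) (y : ℕ → ℝ)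
    (lstar : ℕ → ℕ) (l : ℕ) : ℝ :=
  if lstar l ≤ istar N k π y l then c (π (istar N k π y l + 1)) - c l else 0


open Finset

theorem exists_eq_of_le_of_succ_le {f : ℕ → ℕ} (hf : ∀ m, f (m + 1) ≤ f m + 1) {k : ℕ} :
    ∀ {n : ℕ}, f 0 ≤ k → k ≤ f n → ∃ i ≤ n, f i = k
  | 0, h0, hn => ⟨0, le_rfl, le_antisymm h0 hn⟩
  | n + 1, h0, hn => by
    by_cases hkn : k ≤ f n
    · obtain ⟨i, hi, hfi⟩ := exists_eq_of_le_of_succ_le hf h0 hkn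
      exact ⟨i, by omega, hfi⟩
    · exact ⟨n + 1, le_rfl, by have := hf n; omega⟩

theorem le_sSup_iff_mem_of_downward_closed {T : Set ℕ} (hT : BddAbove T)
    (hdown : ∀ i ∈ T, ∀ j, 1 ≤ j → j ≤ i → j ∈ T) {i : ℕ} (hi : 1 ≤ i) :
    i ≤ sSup T ↔ i ∈ T := by
  refine ⟨fun hle => ?_, fun hiT => le_csSup hT hiT⟩
  rcases T.eq_empty_or_nonempty with rfl | hne
  · rw [csSup_empty, bot_eq_zero] at hle
    omega
  · exact hdown _ (Nat.sSup_mem hne hT) i hi hle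

theorem min_le_min_add_ite {α : Type*} [AddCommGroup α] [LinearOrder α] [IsOrderedAddMonoid α]
    (a b b' : α) : min a b' ≤ min a b + if b ≤ a then b' - b else 0 := by
  split_ifs with hb
  · rw [min_eq_right hb, add_sub_cancel]
    exact min_le_right a b'
  · rw [min_eq_left (le_of_not_ge hb), add_zero]
    exact min_le_left a b'

theorem sum_Icc_two_mul {M : Type*} [AddCommMonoid M] (f : ℕ → M) (N : ℕ) :
    ∑ m ∈ Icc 1 (2 * N), f m = ∑ l ∈ Icc 1 N, (f l + f (l + N)) := by
  have hshift : ∑ l ∈ Icc 1 N, f (l + N) = ∑ m ∈ Ioc N (2 * N), f m :=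
    sum_nbij' (· + N) (· - N) (fun a ha => by simp only [mem_Icc, mem_Ioc] at ha ⊢; omega)
      (fun a ha => by simp only [mem_Icc, mem_Ioc] at ha ⊢; omega)
      (fun a _ => Nat.add_sub_cancel a N) (fun a ha => by simp only [mem_Ioc] at ha; omega)
      (fun _ _ => rfl)
  rw [sum_add_distrib, hshift, ← zero_add 1, Icc_add_one_left_eq_Ioc, Icc_add_one_left_eq_Ioc,
    sum_Ioc_consecutive _ (Nat.zero_le N) (by omega)]

theorem sigma_zero (N : ℕ) (π : ℕ → ℕ) : sigma N π 0 = 0 := by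
  simp [sigma]

theorem sigma_succ (N : ℕ) (π : ℕ → ℕ) (m : ℕ) :
    sigma N π (m + 1) = sigma N π m + if N < π (m + 1) then 1 else 0 := by
  simp only [sigma, card_filter]
  exact sum_Icc_succ_top (by omega) _

theorem sigma_two_mul {N : ℕ} {π : ℕ → ℕ}
    (hbij : Set.BijOn π (Set.Icc 1 (2 * N)) (Set.Icc 1 (2 * N))) :
    sigma N π (2 * N) = N := by
  have himage : (Icc 1 (2 * N)).image π = Icc 1 (2 * N) := by
    simpa [← coe_inj] using hbij.image_eq
  have hinj : Set.InjOn π ↑((Icc 1 (2 * N)).filter fun j => N < π j) :=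
    hbij.injOn.mono fun j hj => by
      simp only [coe_filter, mem_Icc, Set.mem_ofPred_eq, Set.mem_Icc] at hj ⊢
      exact hj.1
  rw [sigma, ← card_image_of_injOn hinj, ← filter_image, himage]
  have : (Icc 1 (2 * N)).filter (N < ·) = Icc (N + 1) (2 * N) := by
    ext m; simp only [mem_filter, mem_Icc]; omega
  rw [this, Nat.card_Icc]
  omega

theorem Kmin_le_two_mul {N k : ℕ} {π : ℕ → ℕ}
    (hbij : Set.BijOn π (Set.Icc 1 (2 * N)) (Set.Icc 1 (2 * N))) (hkN : k ≤ N) :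
    Kmin N k π ≤ 2 * N := by
  obtain ⟨i, hi, hσi⟩ := exists_eq_of_le_of_succ_le (f := sigma N π) (k := k)
    (fun m => by rw [sigma_succ]; split_ifs <;> omega)
    (by rw [sigma_zero]; omega) (by rw [sigma_two_mul hbij]; exact hkN)
  exact (Nat.sInf_le (show i ∈ {i | sigma N π i = k} from hσi)).trans hi

theorem alpha_nonneg {N : ℕ} {c : ℕ → ℝ} {π : ℕ → ℕ}
    (hmono : ∀ i, 1 ≤ i → i < 2 * N → c (π i) ≤ c (π (i + 1))) {i : ℕ} (h1 : 1 ≤ i)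
    (h2 : i < 2 * N) : 0 ≤ alpha c π i :=
  sub_nonneg.mpr (hmono i h1 h2)

theorem sum_alpha_Icc (c : ℕ → ℝ) (π : ℕ → ℕ) {a b : ℕ} (hab : a ≤ b) :
    ∑ i ∈ Icc a b, alpha c π i = c (π (b + 1)) - c (π a) :=
  sum_Icc_sub hab fun i => c (π i)

noncomputable def prefixSum (π : ℕ → ℕ) (z : ℕ → ℝ) (i : ℕ) : ℝ :=
  ∑ j ∈ Icc 1 i, z (π j)

theorem prefixSum_sub (π : ℕ → ℕ) (z z' : ℕ → ℝ) (i : ℕ) :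
    prefixSum π z' i - prefixSum π z i = prefixSum π (fun m => z' m - z m) i :=
  (sum_sub_distrib ..).symm

theorem prefixSum_mono {π : ℕ → ℕ} {z : ℕ → ℝ} {n : ℕ}
    (hz : ∀ j ∈ Icc 1 n, 0 ≤ z (π j)) {i i' : ℕ} (hii' : i ≤ i') (hi' : i' ≤ n) :
    prefixSum π z i ≤ prefixSum π z i' :=
  sum_le_sum_of_subset_of_nonneg (Icc_subset_Icc_right hii') fun j hj _ =>
    hz j (Icc_subset_Icc_right hi' hj)

theorem gain_le_gain_add {N k : ℕ} {c : ℕ → ℝ} {π : ℕ → ℕ}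
    (hα : ∀ i ∈ Icc 1 (Kmin N k π - 1), 0 ≤ alpha c π i) (y y' : ℕ → ℝ) :
    gain N k c π y' ≤ gain N k c π y + ∑ i ∈ Icc 1 (Kmin N k π - 1), alpha c π i *
      if prefixSum π y i ≤ k then prefixSum π y' i - prefixSum π y i else 0 := by
  rw [gain, gain, ← sum_add_distrib]
  refine sum_le_sum fun i hi => ?_
  rw [← mul_add]
  refine mul_le_mul_of_nonneg_left ?_ (hα i hi)
  have key := min_le_min_add_ite ((k : ℝ) - sigma N π i) (prefixSum π y i - sigma N π i)
    (prefixSum π y' i - sigma N π i)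
  simp only [sub_le_sub_iff_right, sub_sub_sub_cancel_right] at key
  exact key

theorem le_istar_iff {N k : ℕ} {π : ℕ → ℕ} {y : ℕ → ℝ} (l : ℕ)
    (hy : ∀ j ∈ Icc 1 (Kmin N k π - 1), 0 ≤ y (π j)) {i : ℕ} (hi : 1 ≤ i) :
    i ≤ istar N k π y l ↔
      i ≤ Kmin N k π - 1 ∧ prefixSum π y i ≤ k ∧ ∀ v ∈ Icc 1 i, π v ≠ l + N := by
  refine (le_sSup_iff_mem_of_downward_closed ⟨Kmin N k π - 1, fun j hj => (mem_Icc.mp hj.1).2⟩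
    ?_ hi).trans (by simp only [Set.mem_ofPred_eq, mem_Icc, hi, true_and, prefixSum])
  rintro i' ⟨hi', hS, hv⟩ j hj hji'
  rw [mem_Icc] at hi'
  exact ⟨mem_Icc.mpr ⟨hj, by omega⟩, (prefixSum_mono hy hji' hi'.2).trans hS,
    fun v hv' => hv v (Icc_subset_Icc_right hji' hv')⟩

section Positions

variable {N k : ℕ} {c : ℕ → ℝ} {π lstar : ℕ → ℕ} {y y' : ℕ → ℝ}

theorem lstar_apply (hbij : Set.BijOn π (Set.Icc 1 (2 * N)) (Set.Icc 1 (2 * N)))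
    (hlstar : ∀ l ∈ Icc 1 (2 * N), lstar l ∈ Icc 1 (2 * N) ∧ π (lstar l) = l)
    {j : ℕ} (hj : j ∈ Icc 1 (2 * N)) : lstar (π j) = j := by
  have hπj : π j ∈ Icc 1 (2 * N) := by simpa using hbij.mapsTo (by simpa using hj)
  exact hbij.injOn (by simpa using (hlstar _ hπj).1) (by simpa using hj) (hlstar _ hπj).2

theorem lstar_lt_lstar_add
    (hlstar : ∀ l ∈ Icc 1 (2 * N), lstar l ∈ Icc 1 (2 * N) ∧ π (lstar l) = l)
    (hprec : ∀ j l, j ∈ Set.Icc 1 (2 * N) → l ∈ Set.Icc 1 (2 * N) →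
      π j ≤ N → π l = π j + N → j < l)
    {l : ℕ} (hl : l ∈ Icc 1 N) : lstar l < lstar (l + N) := by
  rw [mem_Icc] at hl
  obtain ⟨hl₁, hπl₁⟩ := hlstar l (mem_Icc.mpr ⟨hl.1, by omega⟩)
  obtain ⟨hl₂, hπl₂⟩ := hlstar (l + N) (mem_Icc.mpr ⟨by omega, by omega⟩)
  exact hprec _ _ (by simpa using hl₁) (by simpa using hl₂) (by rw [hπl₁]; exact hl.2)
    (by rw [hπl₁, hπl₂])

theorem forall_ne_iff_lt_lstar (hbij : Set.BijOn π (Set.Icc 1 (2 * N)) (Set.Icc 1 (2 * N)))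
    (hlstar : ∀ l ∈ Icc 1 (2 * N), lstar l ∈ Icc 1 (2 * N) ∧ π (lstar l) = l)
    {m : ℕ} (hm : m ∈ Icc 1 (2 * N)) {i : ℕ} :
    (∀ v ∈ Icc 1 i, π v ≠ m) ↔ i < lstar m := by
  obtain ⟨hlm, hπlm⟩ := hlstar m hm
  rw [mem_Icc] at hlm
  constructor
  · intro hv
    by_contra hle
    exact hv (lstar m) (mem_Icc.mpr ⟨hlm.1, by omega⟩) hπlm
  · rintro hlt v hv rfl
    rw [mem_Icc] at hv
    have := lstar_apply hbij hlstar (mem_Icc.mpr ⟨hv.1, by omega⟩)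
    omega

theorem prefixSum_eq_sum_lstar_le (hbij : Set.BijOn π (Set.Icc 1 (2 * N)) (Set.Icc 1 (2 * N)))
    (hlstar : ∀ l ∈ Icc 1 (2 * N), lstar l ∈ Icc 1 (2 * N) ∧ π (lstar l) = l)
    (z : ℕ → ℝ) {i : ℕ} (hi : i ≤ 2 * N) :
    prefixSum π z i = ∑ m ∈ Icc 1 (2 * N) with lstar m ≤ i, z m := by
  have hj : ∀ j ∈ Icc 1 i, j ∈ Icc 1 (2 * N) := fun j hj => Icc_subset_Icc_right hi hj
  refine sum_nbij' π lstar (fun j hj' => mem_filter.mpr ⟨?_, ?_⟩) (fun m hm => ?_)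
    (fun j hj' => lstar_apply hbij hlstar (hj j hj')) (fun m hm => (hlstar m (mem_filter.mp hm).1).2)
    (fun _ _ => rfl)
  · simpa using hbij.mapsTo (by simpa using hj j hj')
  · rw [lstar_apply hbij hlstar (hj j hj')]
    exact (mem_Icc.mp hj').2
  · obtain ⟨hm, hlm⟩ := mem_filter.mp hm
    exact mem_Icc.mpr ⟨(mem_Icc.mp (hlstar m hm).1).1, hlm⟩

theorem prefixSum_eq_sum_window (hbij : Set.BijOn π (Set.Icc 1 (2 * N)) (Set.Icc 1 (2 * N)))
    (hlstar : ∀ l ∈ Icc 1 (2 * N), lstar l ∈ Icc 1 (2 * N) ∧ π (lstar l) = l)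
    (hlt : ∀ l ∈ Icc 1 N, lstar l < lstar (l + N))
    {d : ℕ → ℝ} (hd : ∀ l ∈ Icc 1 N, d (l + N) = -d l) {i : ℕ} (hi : i ≤ 2 * N) :
    prefixSum π d i = ∑ l ∈ Icc 1 N, if lstar l ≤ i ∧ i < lstar (l + N) then d l else 0 := by
  rw [prefixSum_eq_sum_lstar_le hbij hlstar d hi, sum_filter, sum_Icc_two_mul]
  refine sum_congr rfl fun l hl => ?_
  have := hlt l hl
  rw [hd l hl]
  split_ifs <;> first | (exfalso; omega) | ring

theorem sum_alpha_window_eq_superg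
    (hbij : Set.BijOn π (Set.Icc 1 (2 * N)) (Set.Icc 1 (2 * N)))
    (hlstar : ∀ l ∈ Icc 1 (2 * N), lstar l ∈ Icc 1 (2 * N) ∧ π (lstar l) = l)
    (hy : ∀ j ∈ Icc 1 (Kmin N k π - 1), 0 ≤ y (π j)) {l : ℕ} (hl : l ∈ Icc 1 N) :
    ∑ i ∈ Icc 1 (Kmin N k π - 1),
        (if prefixSum π y i ≤ k ∧ lstar l ≤ i ∧ i < lstar (l + N) then alpha c π i else 0) =
      superg N k c π y lstar l := by
  rw [mem_Icc] at hl
  have hl' : l ∈ Icc 1 (2 * N) := mem_Icc.mpr ⟨hl.1, by omega⟩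
  have hlN : l + N ∈ Icc 1 (2 * N) := mem_Icc.mpr ⟨by omega, by omega⟩
  have hl1 : 1 ≤ lstar l := (mem_Icc.mp (hlstar l hl').1).1
  have hwindow : (Icc 1 (Kmin N k π - 1)).filter
      (fun i => prefixSum π y i ≤ k ∧ lstar l ≤ i ∧ i < lstar (l + N)) =
        Icc (lstar l) (istar N k π y l) := by
    ext i
    simp only [mem_filter, mem_Icc]
    constructor
    · rintro ⟨⟨hi1, hiK⟩, hS, hli, hlt⟩
      exact ⟨hli, (le_istar_iff l hy hi1).mpr
        ⟨hiK, hS, (forall_ne_iff_lt_lstar hbij hlstar hlN).mpr hlt⟩⟩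
    · rintro ⟨hli, hist⟩
      obtain ⟨hiK, hS, hv⟩ := (le_istar_iff l hy (by omega)).mp hist
      exact ⟨⟨by omega, hiK⟩, hS, hli, (forall_ne_iff_lt_lstar hbij hlstar hlN).mp hv⟩
  rw [← sum_filter, hwindow, superg]
  split_ifs with h
  · rw [sum_alpha_Icc c π h, (hlstar l hl').2]
  · rw [Icc_eq_empty h, sum_empty]

theorem sum_linearization_eq_sum_superg
    (hbij : Set.BijOn π (Set.Icc 1 (2 * N)) (Set.Icc 1 (2 * N)))
    (hlstar : ∀ l ∈ Icc 1 (2 * N), lstar l ∈ Icc 1 (2 * N) ∧ π (lstar l) = l)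
    (hlt : ∀ l ∈ Icc 1 N, lstar l < lstar (l + N)) (hK : Kmin N k π ≤ 2 * N)
    (hy : ∀ j ∈ Icc 1 (Kmin N k π - 1), 0 ≤ y (π j))
    (hd : ∀ l ∈ Icc 1 N, y' (l + N) - y (l + N) = -(y' l - y l)) :
    ∑ i ∈ Icc 1 (Kmin N k π - 1), alpha c π i *
        (if prefixSum π y i ≤ k then prefixSum π y' i - prefixSum π y i else 0) =
      ∑ l ∈ Icc 1 N, superg N k c π y lstar l * (y' l - y l) := by
  calc _ = ∑ i ∈ Icc 1 (Kmin N k π - 1), ∑ l ∈ Icc 1 N,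
        (if prefixSum π y i ≤ k ∧ lstar l ≤ i ∧ i < lstar (l + N) then alpha c π i else 0) *
          (y' l - y l) := by
        refine sum_congr rfl fun i hi => ?_
        rw [prefixSum_sub, prefixSum_eq_sum_window hbij hlstar hlt (d := fun m => y' m - y m) hd
          (by rw [mem_Icc] at hi; omega)]
        by_cases hS : prefixSum π y i ≤ k <;> simp [hS, mul_sum, ite_mul, mul_ite]
    _ = _ := by
        rw [sum_comm]
        refine sum_congr rfl fun l hl => ?_
        rw [← sum_mul, sum_alpha_window_eq_superg hbij hlstar hy hl]

end Positions

theorem superg_is_supergradient_general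
    (N k h : ℕ) (hkh : k ≤ h) (hhN : h ≤ N)
    (cf : ℝ) (c : ℕ → ℝ) (π : ℕ → ℕ)
    (hreq : Request N cf c π)
    (y : ℕ → ℝ) (hy : IsFrac N h y)
    (lstar : ℕ → ℕ)
    (hlstar : ∀ l ∈ Finset.Icc 1 (2 * N),
      lstar l ∈ Finset.Icc 1 (2 * N) ∧ π (lstar l) = l) :
    ∀ y', IsFrac N h y' →
      gain N k c π y' ≤ gain N k c π y +
        ∑ l ∈ Finset.Icc 1 N, superg N k c π y lstar l * (y' l - y l) := by
  intro y' hy'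
  obtain ⟨-, -, hbij, hmono, hprec⟩ := hreq
  have hK : Kmin N k π ≤ 2 * N := Kmin_le_two_mul hbij (hkh.trans hhN)
  have hy0 : ∀ j ∈ Icc 1 (Kmin N k π - 1), 0 ≤ y (π j) := fun j hj =>
    (hy.1 (π j) (by simpa using hbij.mapsTo (Set.mem_Icc.mpr (by rw [mem_Icc] at hj; omega)))).1
  have hd : ∀ l ∈ Icc 1 N, y' (l + N) - y (l + N) = -(y' l - y l) := fun l hl => by
    rw [hy.2.2 l hl, hy'.2.2 l hl]
    ring
  rw [← sum_linearization_eq_sum_superg hbij hlstar (fun l => lstar_lt_lstar_add hlstar hprec)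
    hK hy0 hd]
  exact gain_le_gain_add
    (fun i hi => alpha_nonneg hmono (mem_Icc.mp hi).1 (by rw [mem_Icc] at hi; omega)) y y'

/-- **Supergradient of the caching gain (Theorem 5).**
The vector `g` with components `g l = (c (π (i*(l)+1)) - c l) · 𝟙{l* ≤ i*(l)}` is a
supergradient of the caching gain at `y`: for every fractional cache state `y'`,
`G(y') ≤ G(y) + ∑_{l=1}^{N} g l · (y' l - y l)`. -/
theorem superg_is_supergradient
    (N k h : ℕ) (hN : 0 < N) (hk : 0 < k) (hkh : k ≤ h) (hhN : h ≤ N)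
    (cf : ℝ) (hcf : 0 < cf) (c : ℕ → ℝ) (π : ℕ → ℕ)
    (hreq : Request N cf c π)
    (y : ℕ → ℝ) (hy : IsFrac N h y)
    (lstar : ℕ → ℕ)
    (hlstar : ∀ l ∈ Finset.Icc 1 (2 * N),
      lstar l ∈ Finset.Icc 1 (2 * N) ∧ π (lstar l) = l) :
    ∀ y', IsFrac N h y' →
      gain N k c π y' ≤ gain N k c π y +
        ∑ l ∈ Finset.Icc 1 N, superg N k c π y lstar l * (y' l - y l) :=
  superg_is_supergradient_general N k h hkh hhN cf c π hreq y hy lstar hlstar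

end ACAI
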